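/- arXiv:0906.1565 — 6 statements merged into one kernel-verified Lean document; each statement's English description precedes it below -/
import Mathlib

section
/- If (f, w) is a feasible point of the LP polytope Q and f ∈ {0,1}^{q|E|}, then the word c = Ξ^{-1}(f) ∈ F^{|E|} satisfies: for every vertex v, the restriction of c to E(v) belongs to C(v) (i.e., c is a codeword of the expander code). -/
open Finset

private lemma stmt6_aux {V E F : Type*} [Fintype E] [DecidableEq F]
    (endV : E → V)
    (CV : (v : V) → Finset (({e : E // endV e = v}) → F))
    (f : E → F → ℝ)
    (wV : (v : V) → (({e : E // endV e = v}) → F) → ℝ)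
    (hw1 : ∀ v, ∑ x ∈ CV v, wV v x = 1)
    (hfV : ∀ e α, f e α =
      ∑ x ∈ (CV (endV e)).filter (fun x => x ⟨e, rfl⟩ = α), wV (endV e) x)
    (hw0 : ∀ v x, x ∈ CV v → 0 ≤ wV v x)
    (c : E → F) (hcf : ∀ e, f e (c e) = 1) :
    ∀ v, (fun e : {e : E // endV e = v} => c e.1) ∈ CV v := by
  intro v
  have key : ∀ (e : E) (he : endV e = v), ∀ x ∈ CV v, wV v x ≠ 0 →
      x ⟨e, he⟩ = c e := by
    intro e he
    subst he
    intro x hx hxw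
    by_contra hne
    -- the sum over the filter is 1, total sum is 1, nonneg weights
    have h1 : ∑ y ∈ (CV (endV e)).filter (fun y => y ⟨e, rfl⟩ = c e),
        wV (endV e) y = 1 := by rw [← hfV]; exact hcf e
    have h2 : ∑ y ∈ (CV (endV e)).filter (fun y => ¬ (y ⟨e, rfl⟩ = c e)),
        wV (endV e) y = 0 := by
      have := Finset.sum_filter_add_sum_filter_not (CV (endV e))
        (fun y => y ⟨e, rfl⟩ = c e) (wV (endV e))
      rw [h1, hw1] at this
      linarith
    have h3 := (Finset.sum_eq_zero_iff_of_nonneg (fun y hy => by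
      exact hw0 (endV e) y (Finset.mem_filter.mp hy).1)).mp h2
    exact hxw (h3 x (Finset.mem_filter.mpr ⟨hx, hne⟩))
  have hne : ∃ x ∈ CV v, wV v x ≠ 0 := by
    by_contra h
    push_neg at h
    have : ∑ x ∈ CV v, wV v x = 0 := Finset.sum_eq_zero h
    rw [hw1] at this; norm_num at this
  obtain ⟨x₀, hx₀, hx₀w⟩ := hne
  have : (fun e : {e : E // endV e = v} => c e.1) = x₀ := by
    funext e'
    have := key e'.1 e'.2 x₀ hx₀ hx₀w
    simpa using this.symm
  rw [this]; exact hx₀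

/-- If (f,w) is a feasible point of the LP polytope Q and f is 0/1-valued, then the
word c = Ξ⁻¹(f) (i.e. the word with f_e^{(c_e)} = 1 for every edge e) satisfies:
for every vertex, the restriction of c to the incident edges is a local codeword.
The bipartite graph G = (A ∪ B, E) is given by the endpoint maps endA, endB. -/
theorem stmt6 {A B E F : Type*} [Fintype A] [Fintype B] [Fintype E] [Fintype F]
    [DecidableEq A] [DecidableEq B] [DecidableEq E] [DecidableEq F]
    (endA : E → A) (endB : E → B)
    (CA : (a : A) → Finset (({e : E // endA e = a}) → F))
    (CB : (b : B) → Finset (({e : E // endB e = b}) → F))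
    (f : E → F → ℝ)
    (wA : (a : A) → (({e : E // endA e = a}) → F) → ℝ)
    (wB : (b : B) → (({e : E // endB e = b}) → F) → ℝ)
    (hwA1 : ∀ a, ∑ x ∈ CA a, wA a x = 1)
    (hwB1 : ∀ b, ∑ x ∈ CB b, wB b x = 1)
    (hfA : ∀ e α, f e α =
      ∑ x ∈ (CA (endA e)).filter (fun x => x ⟨e, rfl⟩ = α), wA (endA e) x)
    (hfB : ∀ e α, f e α =
      ∑ x ∈ (CB (endB e)).filter (fun x => x ⟨e, rfl⟩ = α), wB (endB e) x)
    (hf0 : ∀ e α, 0 ≤ f e α)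
    (hwA0 : ∀ a x, x ∈ CA a → 0 ≤ wA a x)
    (hwB0 : ∀ b x, x ∈ CB b → 0 ≤ wB b x)
    (hf01 : ∀ e α, f e α = 0 ∨ f e α = 1)
    (c : E → F) (hcf : ∀ e, f e (c e) = 1) :
    (∀ a, (fun e : {e : E // endA e = a} => c e.1) ∈ CA a) ∧
      (∀ b, (fun e : {e : E // endB e = b} => c e.1) ∈ CB b) := by
  exact ⟨stmt6_aux endA CA f wA hwA1 hfA hwA0 c hcf,
         stmt6_aux endB CB f wB hwB1 hfB hwB0 c hcf⟩
end

section
/- If the LP decoder output f is integral, i.e., f ∈ {0,1}^{q|E|} achieves the maximum of the LP objective −Σ_{e,α} γ_e^(α) f_e^(α) over the polytope Q, then c = Ξ^{-1}(f) is a nearest-neighbor codeword: d(y, c) ≤ d(y, z) for all z ∈ C. -/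
open Finset

/-- Feasibility in the LP polytope Q: constraints (2)-(6) of the primal LP for the
expander code on the bipartite graph given by the endpoint maps endA, endB. -/
def Feasible {A B E F : Type*} [Fintype F] [DecidableEq A] [DecidableEq B]
    [DecidableEq F]
    (endA : E → A) (endB : E → B)
    (CA : (a : A) → Finset (({e : E // endA e = a}) → F))
    (CB : (b : B) → Finset (({e : E // endB e = b}) → F))
    (f : E → F → ℝ)
    (wA : (a : A) → (({e : E // endA e = a}) → F) → ℝ)
    (wB : (b : B) → (({e : E // endB e = b}) → F) → ℝ) : Prop :=
  (∀ a, ∑ x ∈ CA a, wA a x = 1) ∧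
    (∀ b, ∑ x ∈ CB b, wB b x = 1) ∧
    (∀ e α, f e α =
      ∑ x ∈ (CA (endA e)).filter (fun x => x ⟨e, rfl⟩ = α), wA (endA e) x) ∧
    (∀ e α, f e α =
      ∑ x ∈ (CB (endB e)).filter (fun x => x ⟨e, rfl⟩ = α), wB (endB e) x) ∧
    (∀ e α, 0 ≤ f e α) ∧
    (∀ a x, x ∈ CA a → 0 ≤ wA a x) ∧
    (∀ b x, x ∈ CB b → 0 ≤ wB b x)

/-- If the LP decoder output f is integral and maximizes the LP objective
−∑_{e,α} γ_e^{(α)} f_e^{(α)} over the polytope Q, then c = Ξ⁻¹(f) is a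
nearest-neighbor codeword: d(y,c) ≤ d(y,z) for every codeword z. -/
theorem stmt8 {A B E F : Type*} [Fintype A] [Fintype B] [Fintype E] [Fintype F]
    [DecidableEq A] [DecidableEq B] [DecidableEq E] [DecidableEq F]
    (endA : E → A) (endB : E → B)
    (CA : (a : A) → Finset (({e : E // endA e = a}) → F))
    (CB : (b : B) → Finset (({e : E // endB e = b}) → F))
    (y : E → F) (γ : E → F → ℝ)
    (hγ : ∀ e α, γ e α = if α = y e then -1 else 1)
    (f : E → F → ℝ)
    (wA : (a : A) → (({e : E // endA e = a}) → F) → ℝ)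
    (wB : (b : B) → (({e : E // endB e = b}) → F) → ℝ)
    (hfeas : Feasible endA endB CA CB f wA wB)
    (hf01 : ∀ e α, f e α = 0 ∨ f e α = 1)
    (hopt : ∀ (f' : E → F → ℝ) wA' wB', Feasible endA endB CA CB f' wA' wB' →
      (-∑ e, ∑ α, γ e α * f' e α) ≤ -∑ e, ∑ α, γ e α * f e α)
    (c : E → F) (hcf : ∀ e, f e (c e) = 1) :
    ∀ z : E → F,
      (∀ a, (fun e : {e : E // endA e = a} => z e.1) ∈ CA a) →
      (∀ b, (fun e : {e : E // endB e = b} => z e.1) ∈ CB b) →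
      (Finset.univ.filter (fun e => y e ≠ c e)).card ≤
        (Finset.univ.filter (fun e => y e ≠ z e)).card := by
  intro z hzA hzB
  obtain ⟨hwA1, hwB1, hfA, hfB, hf0, hwA0, hwB0⟩ := hfeas
  -- each edge sums to 1
  have hsum1 : ∀ e : E, ∑ α, f e α = 1 := by
    intro e
    calc ∑ α, f e α
        = ∑ α, ∑ x ∈ (CA (endA e)).filter (fun x => x ⟨e, rfl⟩ = α),
            wA (endA e) x := by simp_rw [hfA]
      _ = ∑ x ∈ CA (endA e), wA (endA e) x :=
          Finset.sum_fiberwise_of_maps_to (fun x _ => Finset.mem_univ _) _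
      _ = 1 := hwA1 _
  -- f is the indicator of c
  have hfc : ∀ e α, f e α = if α = c e then 1 else 0 := by
    intro e α
    by_cases h : α = c e
    · simp [h, hcf e]
    · simp only [h, if_false]
      have h1 := hsum1 e
      rw [← Finset.add_sum_erase _ _ (Finset.mem_univ (c e)), hcf e] at h1
      have h2 : ∑ β ∈ Finset.univ.erase (c e), f e β = 0 := by linarith
      have := (Finset.sum_eq_zero_iff_of_nonneg (fun β _ => hf0 e β)).mp h2 α
        (Finset.mem_erase.mpr ⟨h, Finset.mem_univ _⟩)
      exact this
  -- build the indicator feasible point for z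
  set f' : E → F → ℝ := fun e α => if α = z e then 1 else 0 with hf'
  set wA' : (a : A) → (({e : E // endA e = a}) → F) → ℝ := fun a x =>
    if x = (fun e : {e : E // endA e = a} => z e.1) then 1 else 0 with hwA'
  set wB' : (b : B) → (({e : E // endB e = b}) → F) → ℝ := fun b x =>
    if x = (fun e : {e : E // endB e = b} => z e.1) then 1 else 0 with hwB'
  have hfeas' : Feasible endA endB CA CB f' wA' wB' := by
    refine ⟨?_, ?_, ?_, ?_, ?_, ?_, ?_⟩
    · intro a; rw [Finset.sum_ite_eq' (CA a)]; simp [hzA a]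
    · intro b; rw [Finset.sum_ite_eq' (CB b)]; simp [hzB b]
    · intro e α
      rw [Finset.sum_ite_eq' ((CA (endA e)).filter _)]
      simp only [Finset.mem_filter, hzA (endA e), true_and, hf']
      by_cases h : α = z e <;> simp [h, eq_comm]
    · intro e α
      rw [Finset.sum_ite_eq' ((CB (endB e)).filter _)]
      simp only [Finset.mem_filter, hzB (endB e), true_and, hf']
      by_cases h : α = z e <;> simp [h, eq_comm]
    · intro e α; simp only [hf']; split <;> norm_num
    · intro a x _; simp only [hwA']; split <;> norm_num
    · intro b x _; simp only [hwB']; split <;> norm_num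
  have hineq := hopt f' wA' wB' hfeas'
  have hobjc : ∀ e : E, ∑ α, γ e α * f e α = γ e (c e) := by
    intro e
    simp_rw [hfc e]
    simp [Finset.sum_ite_eq']
  have hobjz : ∀ e : E, ∑ α, γ e α * f' e α = γ e (z e) := by
    intro e
    simp only [hf']
    simp [Finset.sum_ite_eq']
  simp_rw [hobjc, hobjz] at hineq
  -- rewrite γ via distances
  have key : ∀ v : E → F, ∑ e, γ e (v e)
      = 2 * ((Finset.univ.filter (fun e => y e ≠ v e)).card : ℝ) - Fintype.card E := by
    intro v
    have : ∀ e : E, γ e (v e) = 2 * (if y e ≠ v e then (1:ℝ) else 0) - 1 := by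
      intro e; rw [hγ]
      by_cases h : v e = y e
      · simp [h]
      · have h' : ¬ y e = v e := fun hh => h hh.symm
        simp [h, h']
        norm_num
    simp_rw [this, Finset.sum_sub_distrib, ← Finset.mul_sum, Finset.sum_boole,
      Finset.sum_const, Fintype.card]
    simp
  rw [key c, key z] at hineq
  have : ((Finset.univ.filter (fun e => y e ≠ c e)).card : ℝ) ≤
      ((Finset.univ.filter (fun e => y e ≠ z e)).card : ℝ) := by linarith
  exact_mod_cast this
end

section
/- Let α, β, ζ_A, ζ_B ∈ (0,1] and 0 ≤ γ < 1 with γ ≤ √(ζ_Aζ_B). Suppose αζ_A ≤ (1−γ)αβ + γ√(αβ) and βζ_B ≤ (1−γ)αβ + γ√(αβ). Then max(αζ_A, βζ_B) ≥ (ζ_Aζ_B − γ√(ζ_Aζ_B))/(1−γ). -/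
/-- Real-analytic inequality from the error-core size theorem: if
αζ_A ≤ (1−γ)αβ + γ√(αβ) and βζ_B ≤ (1−γ)αβ + γ√(αβ) with α, β, ζ_A, ζ_B ∈ (0,1],
0 ≤ γ < 1 and γ ≤ √(ζ_Aζ_B), then
max(αζ_A, βζ_B) ≥ (ζ_Aζ_B − γ√(ζ_Aζ_B))/(1−γ). -/
theorem stmt15 (α β ζA ζB γ : ℝ)
    (hα0 : 0 < α) (hα1 : α ≤ 1) (hβ0 : 0 < β) (hβ1 : β ≤ 1)
    (hζA0 : 0 < ζA) (hζA1 : ζA ≤ 1) (hζB0 : 0 < ζB) (hζB1 : ζB ≤ 1)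
    (hγ0 : 0 ≤ γ) (hγ1 : γ < 1) (hγζ : γ ≤ Real.sqrt (ζA * ζB))
    (h1 : α * ζA ≤ (1 - γ) * (α * β) + γ * Real.sqrt (α * β))
    (h2 : β * ζB ≤ (1 - γ) * (α * β) + γ * Real.sqrt (α * β)) :
    (ζA * ζB - γ * Real.sqrt (ζA * ζB)) / (1 - γ) ≤ max (α * ζA) (β * ζB) := by
  set t := Real.sqrt (α * β) with htdef
  set m := Real.sqrt (ζA * ζB) with hmdef
  have ht2 : t ^ 2 = α * β := Real.sq_sqrt (by positivity)
  have hm2 : m ^ 2 = ζA * ζB := Real.sq_sqrt (by positivity)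
  have ht0 : 0 < t := Real.sqrt_pos.mpr (by positivity)
  have hm0 : 0 < m := Real.sqrt_pos.mpr (by positivity)
  have ht1 : t ≤ 1 := by
    rw [htdef, show (1:ℝ) = Real.sqrt 1 by simp]
    exact Real.sqrt_le_sqrt (by nlinarith)
  -- multiply the two hypotheses
  have hprod : (α * ζA) * (β * ζB) ≤ ((1 - γ) * (α * β) + γ * t) ^ 2 := by
    have hA : 0 ≤ α * ζA := by positivity
    nlinarith [mul_le_mul h1 h2 (by positivity) (le_trans hA h1)]
  have hsq : m ^ 2 ≤ ((1 - γ) * t + γ) ^ 2 := by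
    have e1 : ((1 - γ) * (α * β) + γ * t) ^ 2 = t ^ 2 * ((1 - γ) * t + γ) ^ 2 := by
      rw [← ht2]; ring
    have e2 : (α * ζA) * (β * ζB) = t ^ 2 * m ^ 2 := by rw [ht2, hm2]; ring
    have h3 : t ^ 2 * m ^ 2 ≤ t ^ 2 * ((1 - γ) * t + γ) ^ 2 := by
      rw [← e1, ← e2]; exact hprod
    exact le_of_mul_le_mul_left h3 (pow_pos ht0 2)
  have hr : 0 ≤ (1 - γ) * t + γ := by nlinarith
  have hkey : m ≤ (1 - γ) * t + γ := by
    calc m = Real.sqrt (m ^ 2) := (Real.sqrt_sq hm0.le).symm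
      _ ≤ Real.sqrt (((1 - γ) * t + γ) ^ 2) := Real.sqrt_le_sqrt hsq
      _ = (1 - γ) * t + γ := Real.sqrt_sq hr
  -- geometric mean bound: t * m ≤ max
  have hmax : t * m ≤ max (α * ζA) (β * ζB) := by
    have hMn : 0 ≤ max (α * ζA) (β * ζB) := le_max_of_le_left (by positivity)
    have h1' : α * ζA ≤ max (α * ζA) (β * ζB) := le_max_left _ _
    have h2' : β * ζB ≤ max (α * ζA) (β * ζB) := le_max_right _ _
    have hsq' : (t * m) * (t * m) ≤ max (α * ζA) (β * ζB) * max (α * ζA) (β * ζB) := by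
      have e : (t * m) * (t * m) = (α * ζA) * (β * ζB) := by
        have : (t * m) * (t * m) = t ^ 2 * m ^ 2 := by ring
        rw [this, ht2, hm2]; ring
      rw [e]
      exact mul_le_mul h1' h2' (by positivity) hMn
    nlinarith [mul_pos ht0 hm0]
  rw [div_le_iff₀ (by linarith)]
  have : ζA * ζB - γ * m = m * (m - γ) := by rw [← hm2]; ring
  rw [this]
  nlinarith [hmax, hkey, hm0.le, mul_le_mul_of_nonneg_left hkey hm0.le]
end

section
/- (Orientation lemma) Let G = (A∪B, E) be a Δ-regular bipartite graph with |A|=|B|=n and eigenvalue ratio γ. Let β̂, α̂ ∈ (0,1] with γ ≤ √(β̂α̂), and suppose β̂Δ/2 and α̂Δ/2 are integers. Let Ê ⊆ E with |Ê| ≤ ((β̂α̂ − γ√(β̂α̂))/(1−γ))·Δn. Then there is an orientation of the edges of Ê such that every vertex of A has at most β̂Δ/2 incoming edges and every vertex of B has at most α̂Δ/2 incoming edges. -/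
/-!
Give every vertex `a ∈ A` exactly `β̂Δ/2` slots and every vertex `b ∈ B` exactly `α̂Δ/2` slots.
Orienting an edge towards one of its endpoints means parking it in a free slot of that endpoint,
so by Hall's theorem the orientation exists once every set `S ⊆ Ê` satisfies
`|S| ≤ (β̂Δ/2)|A(S)| + (α̂Δ/2)|B(S)|`, where `A(S)`, `B(S)` are the endpoints of `S`.
Since `S` lies between `A(S)` and `B(S)`, with `x = |A(S)|/n`, `y = |B(S)|/n` the ratio `|S|/(Δn)`
is at most both the mixing bound `(1-γ)xy + γ√(xy)` and the size bound on `Ê`. Depending on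
whether `(1-γ)√(xy) + γ ≤ √(β̂α̂)`, one of these two is at most `√(β̂α̂)√(xy)`, which by AM-GM is
at most `(β̂x + α̂y)/2`.
-/

open Finset

section Orientation

variable {A B E : Type*} (c : A → ℕ) (d : B → ℕ)

def capacitySlots (U : Finset A) (V : Finset B) :
    Finset ((Σ a, Fin (c a)) ⊕ (Σ b, Fin (d b))) :=
  (U.sigma fun _ => univ).disjSum (V.sigma fun _ => univ)

variable {c d}

@[simp]
lemma mem_capacitySlots {U : Finset A} {V : Finset B}
    {x : (Σ a, Fin (c a)) ⊕ (Σ b, Fin (d b))} :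
    x ∈ capacitySlots c d U V ↔ Sum.elim (fun p => p.1 ∈ U) (fun q => q.1 ∈ V) x := by
  cases x <;> simp [capacitySlots]

lemma card_capacitySlots (U : Finset A) (V : Finset B) :
    #(capacitySlots c d U V) = ∑ a ∈ U, c a + ∑ b ∈ V, d b := by
  simp [capacitySlots, card_disjSum, card_sigma]

theorem Fintype.exists_orientation_of_forall_card_le [DecidableEq A] [DecidableEq B] [Fintype E]
    (endA : E → A) (endB : E → B)
    (hall : ∀ S : Finset E, #S ≤ ∑ a ∈ S.image endA, c a + ∑ b ∈ S.image endB, d b) :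
    ∃ dir : E → Bool, (∀ a, #{e | endA e = a ∧ dir e = true} ≤ c a) ∧
      ∀ b, #{e | endB e = b ∧ dir e = false} ≤ d b := by
  have hslots (S : Finset E) : S.biUnion (fun e => capacitySlots c d {endA e} {endB e}) =
      capacitySlots c d (S.image endA) (S.image endB) := by
    ext x; cases x <;> simp [eq_comm]
  obtain ⟨f, hf_inj, hf_mem⟩ := (all_card_le_biUnion_card_iff_exists_injective
    fun e => capacitySlots c d {endA e} {endB e}).mp fun S => by
      rw [hslots, card_capacitySlots]; exact hall S
  refine ⟨fun e => (f e).isLeft, fun a => ?_, fun b => ?_⟩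
  · calc #{e | endA e = a ∧ (f e).isLeft = true}
        ≤ #(capacitySlots c d {a} (∅ : Finset B)) := by
          refine card_le_card_of_injOn f (fun e he => ?_) hf_inj.injOn
          obtain ⟨rfl, hdir⟩ := by simpa using he
          have := hf_mem e
          cases h : f e <;> simp_all
      _ = c a := by simp [card_capacitySlots]
  · calc #{e | endB e = b ∧ (f e).isLeft = false}
        ≤ #(capacitySlots c d (∅ : Finset A) {b}) := by
          refine card_le_card_of_injOn f (fun e he => ?_) hf_inj.injOn
          obtain ⟨rfl, hdir⟩ := by simpa using he
          have := hf_mem e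
          cases h : f e <;> simp_all
      _ = d b := by simp [card_capacitySlots]

theorem Finset.exists_orientation_of_forall_card_le [DecidableEq A] [DecidableEq B]
    (endA : E → A) (endB : E → B) (F : Finset E)
    (hall : ∀ S ⊆ F, #S ≤ ∑ a ∈ S.image endA, c a + ∑ b ∈ S.image endB, d b) :
    ∃ dir : E → Bool, (∀ a, #{e ∈ F | endA e = a ∧ dir e = true} ≤ c a) ∧
      ∀ b, #{e ∈ F | endB e = b ∧ dir e = false} ≤ d b := by
  classical
  obtain ⟨dir, hA, hB⟩ := Fintype.exists_orientation_of_forall_card_le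
    (fun e : F => endA e) (fun e : F => endB e) fun S => by
      have h := hall (S.map (Function.Embedding.subtype _)) (by simp +contextual [subset_iff])
      rwa [card_map, map_eq_image, image_image, image_image] at h
  have hcard (p : E → Prop) [DecidablePred p] : #{e ∈ F | p e} = #{e : F | p e} := by
    rw [univ_eq_attach, filter_attach, card_map, card_attach]
  refine ⟨fun e => if h : e ∈ F then dir ⟨e, h⟩ else true, fun a => ?_, fun b => ?_⟩
  · simpa [hcard] using hA a
  · simpa [hcard] using hB b

end Orientation

lemma sqrt_mul_sqrt_le_half_add {β α x y : ℝ} (hβ : 0 ≤ β) (hα : 0 ≤ α) (hx : 0 ≤ x)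
    (hy : 0 ≤ y) :
    √(β * α) * √(x * y) ≤ (β * x + α * y) / 2 := by
  have h : √(β * α) * √(x * y) = √(β * x) * √(α * y) := by
    rw [← Real.sqrt_mul (by positivity), ← Real.sqrt_mul (by positivity)]
    ring_nf
  have := two_mul_le_add_sq √(β * x) √(α * y)
  rw [Real.sq_sqrt (by positivity), Real.sq_sqrt (by positivity)] at this
  linarith

lemma min_mixingBound_le_half_add {γ β α x y : ℝ} (hγ : γ < 1) (hβ : 0 ≤ β) (hα : 0 ≤ α)
    (hx : 0 ≤ x) (hy : 0 ≤ y) :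
    min ((1 - γ) * (x * y) + γ * √(x * y)) ((β * α - γ * √(β * α)) / (1 - γ)) ≤
      (β * x + α * y) / 2 := by
  set s := √(x * y)
  set r := √(β * α)
  have h1γ : 0 < 1 - γ := by linarith
  refine le_trans ?_ (sqrt_mul_sqrt_le_half_add hβ hα hx hy)
  rcases le_or_gt ((1 - γ) * s + γ) r with h | h
  · refine (min_le_left _ _).trans ?_
    calc (1 - γ) * (x * y) + γ * s = ((1 - γ) * s + γ) * s := by
          rw [← Real.mul_self_sqrt (mul_nonneg hx hy)]; ring
      _ ≤ r * s := by gcongr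
  · refine (min_le_right _ _).trans ?_
    calc (β * α - γ * r) / (1 - γ) = r * ((r - γ) / (1 - γ)) := by
          rw [← Real.mul_self_sqrt (mul_nonneg hβ hα)]; ring
      _ ≤ r * s := by gcongr; rw [div_le_iff₀ h1γ]; linarith

lemma le_capacity_of_mixing_bounds {γ β α : ℝ} {Δ n u v m kA kB : ℕ} (hγ : γ < 1)
    (hβ : 0 ≤ β) (hα : 0 ≤ α) (hkA : β * Δ / 2 = kA) (hkB : α * Δ / 2 = kB)
    (hmix : (m : ℝ) ≤ ((1 - γ) * (u / n * (v / n)) + γ * √(u / n * (v / n))) * (Δ * n))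
    (hsize : (m : ℝ) ≤ (β * α - γ * √(β * α)) / (1 - γ) * (Δ * n)) :
    m ≤ kA * u + kB * v := by
  have hΔn : (0 : ℝ) ≤ Δ * n := by positivity
  suffices (m : ℝ) ≤ kA * u + kB * v by exact_mod_cast this
  calc (m : ℝ)
      ≤ min ((1 - γ) * (u / n * (v / n)) + γ * √(u / n * (v / n)))
          ((β * α - γ * √(β * α)) / (1 - γ)) * (Δ * n) := by
        rw [min_mul_of_nonneg _ _ hΔn]
        exact le_min hmix hsize
    _ ≤ (β * (u / n) + α * (v / n)) / 2 * (Δ * n) := by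
        gcongr
        exact min_mixingBound_le_half_add hγ hβ hα (by positivity) (by positivity)
    _ = (kA * u + kB * v) * (n / n) := by rw [← hkA, ← hkB]; ring
    _ ≤ kA * u + kB * v := mul_le_of_le_one_right (by positivity) (div_self_le_one _)

theorem stmt17_general {A B E : Type*} [Fintype E]
    [DecidableEq A] [DecidableEq B]
    (endA : E → A) (endB : E → B) (Δ n : ℕ)
    (γ : ℝ) (hγ1 : γ < 1)
    (hmix : ∀ (UA : Finset A) (UB : Finset B),
      ((Finset.univ.filter (fun e => endA e ∈ UA ∧ endB e ∈ UB)).card : ℝ) ≤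
        ((1 - γ) * ((UA.card : ℝ)/n * ((UB.card : ℝ)/n))
          + γ * Real.sqrt ((UA.card : ℝ)/n * ((UB.card : ℝ)/n))) * (Δ * n))
    (βh αh : ℝ) (hβ0 : 0 < βh) (hα0 : 0 < αh)
    (hintA : ∃ k : ℕ, βh * Δ / 2 = (k : ℝ))
    (hintB : ∃ k : ℕ, αh * Δ / 2 = (k : ℝ))
    (Ehat : Finset E)
    (hsize : (Ehat.card : ℝ) ≤
      (βh * αh - γ * Real.sqrt (βh * αh)) / (1 - γ) * (Δ * n)) :
    ∃ dir : E → Bool,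
      (∀ a : A,
        ((Ehat.filter (fun e => endA e = a ∧ dir e = true)).card : ℝ) ≤ βh * Δ / 2) ∧
      (∀ b : B,
        ((Ehat.filter (fun e => endB e = b ∧ dir e = false)).card : ℝ) ≤ αh * Δ / 2) := by
  obtain ⟨kA, hkA⟩ := hintA
  obtain ⟨kB, hkB⟩ := hintB
  have hall : ∀ S ⊆ Ehat, #S ≤ ∑ a ∈ S.image endA, kA + ∑ b ∈ S.image endB, kB := by
    intro S hS
    have h_between : #S ≤ #{e | endA e ∈ S.image endA ∧ endB e ∈ S.image endB} :=
      card_le_card fun e he => by simpa using ⟨⟨e, he, rfl⟩, e, he, rfl⟩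
    simpa [mul_comm] using le_capacity_of_mixing_bounds hγ1 hβ0.le hα0.le hkA hkB
      ((Nat.cast_le.mpr h_between).trans (hmix _ _))
      ((Nat.cast_le.mpr (card_le_card hS)).trans hsize)
  obtain ⟨dir, hdirA, hdirB⟩ := Ehat.exists_orientation_of_forall_card_le endA endB hall
  exact ⟨dir, fun a => hkA ▸ mod_cast hdirA a, fun b => hkB ▸ mod_cast hdirB b⟩

/-- Orientation lemma: in a Δ-regular bipartite graph (|A| = |B| = n) with eigenvalue
ratio γ (the expander mixing bound is available as hmix), if β̂, α̂ ∈ (0,1] with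
γ ≤ √(β̂α̂), β̂Δ/2 and α̂Δ/2 integers, and Ehat ⊆ E has
|Ehat| ≤ ((β̂α̂ − γ√(β̂α̂))/(1−γ))Δn, then Ehat admits a (β̂/2, α̂/2)-orientation: directions
(`dir e = true` meaning pointed towards the A-endpoint) such that every vertex of A
has at most β̂Δ/2 incoming edges and every vertex of B at most α̂Δ/2 incoming edges. -/
theorem stmt17 {A B E : Type*} [Fintype A] [Fintype B] [Fintype E]
    [DecidableEq A] [DecidableEq B] [DecidableEq E]
    (endA : E → A) (endB : E → B) (Δ n : ℕ)
    (hregA : ∀ a, (Finset.univ.filter (fun e => endA e = a)).card = Δ)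
    (hregB : ∀ b, (Finset.univ.filter (fun e => endB e = b)).card = Δ)
    (hnA : Fintype.card A = n) (hnB : Fintype.card B = n)
    (γ : ℝ) (hγ0 : 0 ≤ γ) (hγ1 : γ < 1)
    (hmix : ∀ (UA : Finset A) (UB : Finset B),
      ((Finset.univ.filter (fun e => endA e ∈ UA ∧ endB e ∈ UB)).card : ℝ) ≤
        ((1 - γ) * ((UA.card : ℝ)/n * ((UB.card : ℝ)/n))
          + γ * Real.sqrt ((UA.card : ℝ)/n * ((UB.card : ℝ)/n))) * (Δ * n))
    (βh αh : ℝ) (hβ0 : 0 < βh) (hβ1 : βh ≤ 1) (hα0 : 0 < αh) (hα1 : αh ≤ 1)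
    (hγβα : γ ≤ Real.sqrt (βh * αh))
    (hintA : ∃ k : ℕ, βh * Δ / 2 = (k : ℝ))
    (hintB : ∃ k : ℕ, αh * Δ / 2 = (k : ℝ))
    (Ehat : Finset E)
    (hsize : (Ehat.card : ℝ) ≤
      (βh * αh - γ * Real.sqrt (βh * αh)) / (1 - γ) * (Δ * n)) :
    ∃ dir : E → Bool,
      (∀ a : A,
        ((Ehat.filter (fun e => endA e = a ∧ dir e = true)).card : ℝ) ≤ βh * Δ / 2) ∧
      (∀ b : B,
        ((Ehat.filter (fun e => endB e = b ∧ dir e = false)).card : ℝ) ≤ αh * Δ / 2) :=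
  stmt17_general endA endB Δ n γ hγ1 hmix βh αh hβ0 hα0 hintA hintB Ehat hsize
end

section
/- In any orientation of a finite directed graph, if there exists a directed path from a vertex w with in-degree strictly below its capacity to a vertex v with in-degree strictly above its capacity, then reversing all edges along the path decreases the total capacity violation (sum over vertices of max(0, indeg(u) − cap(u))) by exactly 1. -/
open Finset

/-- Reversing a directed path from a vertex w whose in-degree is strictly below its
capacity to a vertex v whose in-degree is strictly above its capacity (which
decreases indeg(v) by 1, increases indeg(w) by 1, and leaves all other in-degrees
unchanged) decreases the total capacity violation
∑_u max(0, indeg(u) − cap(u)) by exactly 1. -/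
theorem stmt18 {V : Type*} [Fintype V] [DecidableEq V]
    (cap indeg indeg' : V → ℕ) (v w : V) (hvw : v ≠ w)
    (hv : cap v < indeg v) (hw : indeg w < cap w)
    (h'v : indeg' v = indeg v - 1) (h'w : indeg' w = indeg w + 1)
    (hother : ∀ u, u ≠ v → u ≠ w → indeg' u = indeg u) :
    (∑ u, (indeg' u - cap u)) + 1 = ∑ u, (indeg u - cap u) := by
  have hmemw : w ∈ (univ : Finset V).erase v := mem_erase.2 ⟨Ne.symm hvw, mem_univ w⟩
  have key : ∀ f : V → ℕ, ∑ u, f u = f v + (f w + ∑ u ∈ ((univ : Finset V).erase v).erase w, f u) := by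
    intro f
    rw [← Finset.add_sum_erase _ f (mem_univ v), ← Finset.add_sum_erase _ f hmemw]
  rw [key (fun u => indeg' u - cap u), key (fun u => indeg u - cap u)]
  have hrest : ∑ u ∈ ((univ : Finset V).erase v).erase w, (indeg' u - cap u)
      = ∑ u ∈ ((univ : Finset V).erase v).erase w, (indeg u - cap u) := by
    apply Finset.sum_congr rfl
    intro u hu
    rw [hother u (mem_erase.1 (mem_erase.1 hu).2).1 (mem_erase.1 hu).1]
  rw [hrest, h'v, h'w]
  have h1 : indeg w + 1 - cap w = 0 := by omega
  have h2 : indeg w - cap w = 0 := by omega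
  rw [h1, h2]
  omega
end

section
/- Let G = (A∪B, E) be a Δ-regular bipartite graph (|A|=|B|=n) with eigenvalue ratio γ, and let C be the expander code built from local codes C_A (relative distance δ_A) on A-vertices and C_B (relative distance δ_B) on B-vertices. Then the relative minimum distance of C is at least (δ_Aδ_B − γ√(δ_Aδ_B))/(1−γ), provided γ ≤ √(δ_Aδ_B). -/
/-!
Let `S` be the support of a nonzero codeword and `α n`, `β n` the numbers of `A`- and
`B`-vertices it touches. Every touched vertex sees a nonzero local codeword, so
`|S| ≥ δ_A α Δn` and `|S| ≥ δ_B β Δn`, hence `|S| ≥ √(δ_Aδ_B) √(αβ) Δn`. Since `S` lies inside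
the edges between the touched vertices, the mixing bound gives
`|S| ≤ ((1-γ)αβ + γ√(αβ)) Δn`. Comparing the two bounds yields
`√(αβ) ≥ (√(δ_Aδ_B) - γ)/(1-γ)`, and substituting back into the lower bound proves the claim.
-/

open Finset

theorem mul_card_image_le_card_of_le_card_fiber {α β : Type*} [DecidableEq β] {f : α → β}
    (s : Finset α) (d : ℝ) (hd : ∀ b ∈ s.image f, d ≤ #{a ∈ s | f a = b}) :
    d * #(s.image f) ≤ #s := by
  have hceil : ⌈d⌉₊ * #(s.image f) ≤ #s :=
    mul_card_image_le_card s _ fun b hb => Nat.ceil_le.mpr (hd b hb)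
  calc d * #(s.image f) ≤ ⌈d⌉₊ * #(s.image f) := by gcongr; exact Nat.le_ceil d
    _ ≤ #s := by exact_mod_cast hceil

section LocalView

variable {E ι F : Type*} [Fintype E] [DecidableEq ι] [Zero F] [DecidableEq F]

theorem card_support_restrict_fiber (f : E → ι) (c : E → F) (i : ι) :
    #{e : {e // f e = i} | c e ≠ 0} = #{e ∈ ({e | c e ≠ 0} : Finset E) | f e = i} := by
  rw [← card_subtype (f · = i)]
  congr 1
  ext e
  simp

theorem restrict_fiber_ne_zero {f : E → ι} {c : E → F} {i : ι}
    (hi : i ∈ ({e | c e ≠ 0} : Finset E).image f) :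
    (fun e : {e // f e = i} => c e.1) ≠ 0 := by
  obtain ⟨e, he, rfl⟩ := mem_image.mp hi
  exact fun h => (mem_filter.mp he).2 (congrFun h ⟨e, rfl⟩)

theorem mul_card_image_le_card_support (f : E → ι) (c : E → F) (d : ℝ)
    (hloc : ∀ i, (fun e : {e // f e = i} => c e.1) ≠ 0 → d ≤ #{e : {e // f e = i} | c e ≠ 0}) :
    d * #(({e | c e ≠ 0} : Finset E).image f) ≤ #({e | c e ≠ 0} : Finset E) :=
  mul_card_image_le_card_of_le_card_fiber _ d fun i hi =>
    card_support_restrict_fiber f c i ▸ hloc i (restrict_fiber_ne_zero hi)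

end LocalView

theorem le_of_mixing_bound {δA δB γ α β w : ℝ} (hδA : 0 ≤ δA) (hδB : 0 ≤ δB) (hγ : γ < 1)
    (hα : 0 ≤ α) (hβ : 0 ≤ β) (hw : 0 < w) (hwA : δA * α ≤ w) (hwB : δB * β ≤ w)
    (hmix : w ≤ (1 - γ) * (α * β) + γ * √(α * β)) :
    (δA * δB - γ * √(δA * δB)) / (1 - γ) ≤ w := by
  set s := √(δA * δB)
  set t := √(α * β)
  have hs : 0 ≤ s := Real.sqrt_nonneg _
  have hst : s * t ≤ w := by
    calc s * t = √((δA * α) * (δB * β)) := by rw [← Real.sqrt_mul (by positivity)]; ring_nf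
      _ ≤ √(w * w) := by gcongr
      _ = w := Real.sqrt_mul_self hw.le
  have hmix' : w ≤ ((1 - γ) * t + γ) * t := by
    rwa [← Real.mul_self_sqrt (mul_nonneg hα hβ), ← mul_assoc, ← add_mul] at hmix
  have ht : 0 < t := by
    by_contra! h
    rw [le_antisymm h (Real.sqrt_nonneg _)] at hmix'
    linarith
  have hsγ : s ≤ (1 - γ) * t + γ := le_of_mul_le_mul_right (hst.trans hmix') ht
  have hss : s * s = δA * δB := Real.mul_self_sqrt (by positivity)
  rw [div_le_iff₀ (by linarith), ← hss]
  nlinarith [mul_le_mul_of_nonneg_left hsγ hs]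

theorem stmt19_general {A B E F : Type*} [Fintype E]
    [DecidableEq A] [DecidableEq B]
    [Field F] [DecidableEq F]
    (endA : E → A) (endB : E → B) (Δ n : ℕ)
    (γ : ℝ) (hγ1 : γ < 1)
    (hmix : ∀ (UA : Finset A) (UB : Finset B),
      ((Finset.univ.filter (fun e => endA e ∈ UA ∧ endB e ∈ UB)).card : ℝ) ≤
        ((1 - γ) * ((UA.card : ℝ)/n * ((UB.card : ℝ)/n))
          + γ * Real.sqrt ((UA.card : ℝ)/n * ((UB.card : ℝ)/n))) * (Δ * n))
    (δA δB : ℝ) (hδA0 : 0 < δA) (hδB0 : 0 < δB)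
    (CA : (a : A) → Submodule F ({e : E // endA e = a} → F))
    (CB : (b : B) → Submodule F ({e : E // endB e = b} → F))
    (hdA : ∀ a, ∀ x ∈ CA a, x ≠ 0 → δA * Δ ≤
      ((Finset.univ.filter (fun e : {e : E // endA e = a} => x e ≠ 0)).card : ℝ))
    (hdB : ∀ b, ∀ x ∈ CB b, x ≠ 0 → δB * Δ ≤
      ((Finset.univ.filter (fun e : {e : E // endB e = b} => x e ≠ 0)).card : ℝ))
    (c : E → F)
    (hcA : ∀ a, (fun e : {e : E // endA e = a} => c e.1) ∈ CA a)
    (hcB : ∀ b, (fun e : {e : E // endB e = b} => c e.1) ∈ CB b)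
    (hc0 : c ≠ 0) :
    (δA * δB - γ * Real.sqrt (δA * δB)) / (1 - γ) * (Δ * n) ≤
      ((Finset.univ.filter (fun e => c e ≠ 0)).card : ℝ) := by
  set S : Finset E := {e | c e ≠ 0}
  have hS : 0 < (#S : ℝ) := by
    obtain ⟨e, he⟩ := Function.ne_iff.mp hc0
    exact_mod_cast card_pos.mpr ⟨e, by simpa [S] using he⟩
  have hA : δA * Δ * #(S.image endA) ≤ (#S : ℝ) :=
    mul_card_image_le_card_support endA c _ fun a => hdA a _ (hcA a)
  have hB : δB * Δ * #(S.image endB) ≤ (#S : ℝ) :=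
    mul_card_image_le_card_support endB c _ fun b => hdB b _ (hcB b)
  have hS_sub : S ⊆ ({e | endA e ∈ S.image endA ∧ endB e ∈ S.image endB} : Finset E) :=
    fun e he =>
      mem_filter.mpr ⟨mem_univ e, mem_image_of_mem endA he, mem_image_of_mem endB he⟩
  have hSmix := (Nat.cast_le.mpr (card_le_card hS_sub)).trans (hmix _ _)
  rcases (by positivity : (0 : ℝ) ≤ Δ * n).eq_or_lt with hΔn | hΔn
  · rw [← hΔn, mul_zero]
    exact hS.le
  rw [← le_div_iff₀ hΔn]
  have hn : (0 : ℝ) < n := pos_of_mul_pos_right hΔn (Nat.cast_nonneg Δ)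
  refine le_of_mixing_bound hδA0.le hδB0.le hγ1 (by positivity) (by positivity)
    (div_pos hS hΔn) ?_ ?_ ((div_le_iff₀ hΔn).mpr hSmix)
  · rw [le_div_iff₀ hΔn]
    calc _ = δA * Δ * #(S.image endA) := by field_simp
      _ ≤ #S := hA
  · rw [le_div_iff₀ hΔn]
    calc _ = δB * Δ * #(S.image endB) := by field_simp
      _ ≤ #S := hB

/-- Minimum-distance bound for expander codes: if C_A and C_B (the local codes on the
A- and B-vertices of a Δ-regular bipartite graph with |A| = |B| = n and eigenvalue
ratio γ, for which the expander mixing bound hmix holds) have relative minimum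
distances δ_A and δ_B, and γ ≤ √(δ_Aδ_B), then every nonzero codeword c of the
expander code has Hamming weight at least ((δ_Aδ_B − γ√(δ_Aδ_B))/(1−γ))·Δn, i.e.
the relative minimum distance of the expander code is at least
(δ_Aδ_B − γ√(δ_Aδ_B))/(1−γ). -/
theorem stmt19 {A B E F : Type*} [Fintype A] [Fintype B] [Fintype E]
    [DecidableEq A] [DecidableEq B] [DecidableEq E]
    [Field F] [Fintype F] [DecidableEq F]
    (endA : E → A) (endB : E → B) (Δ n : ℕ)
    (hregA : ∀ a, Fintype.card {e : E // endA e = a} = Δ)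
    (hregB : ∀ b, Fintype.card {e : E // endB e = b} = Δ)
    (hnA : Fintype.card A = n) (hnB : Fintype.card B = n)
    (γ : ℝ) (hγ0 : 0 ≤ γ) (hγ1 : γ < 1)
    (hmix : ∀ (UA : Finset A) (UB : Finset B),
      ((Finset.univ.filter (fun e => endA e ∈ UA ∧ endB e ∈ UB)).card : ℝ) ≤
        ((1 - γ) * ((UA.card : ℝ)/n * ((UB.card : ℝ)/n))
          + γ * Real.sqrt ((UA.card : ℝ)/n * ((UB.card : ℝ)/n))) * (Δ * n))
    (δA δB : ℝ) (hδA0 : 0 < δA) (hδA1 : δA ≤ 1) (hδB0 : 0 < δB) (hδB1 : δB ≤ 1)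
    (hγδ : γ ≤ Real.sqrt (δA * δB))
    (CA : (a : A) → Submodule F ({e : E // endA e = a} → F))
    (CB : (b : B) → Submodule F ({e : E // endB e = b} → F))
    (hdA : ∀ a, ∀ x ∈ CA a, x ≠ 0 → δA * Δ ≤
      ((Finset.univ.filter (fun e : {e : E // endA e = a} => x e ≠ 0)).card : ℝ))
    (hdB : ∀ b, ∀ x ∈ CB b, x ≠ 0 → δB * Δ ≤
      ((Finset.univ.filter (fun e : {e : E // endB e = b} => x e ≠ 0)).card : ℝ))
    (c : E → F)
    (hcA : ∀ a, (fun e : {e : E // endA e = a} => c e.1) ∈ CA a)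
    (hcB : ∀ b, (fun e : {e : E // endB e = b} => c e.1) ∈ CB b)
    (hc0 : c ≠ 0) :
    (δA * δB - γ * Real.sqrt (δA * δB)) / (1 - γ) * (Δ * n) ≤
      ((Finset.univ.filter (fun e => c e ≠ 0)).card : ℝ) :=
  stmt19_general endA endB Δ n γ hγ1 hmix δA δB hδA0 hδB0 CA CB hdA hdB c hcA hcB hc0
end
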